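/- Let λ* solve min_{λ∈Λ} g(λ) over a polyhedron Λ with strict complementarity at λ*. Then there exists r > 0 such that for every λ ∈ Λ with ‖λ − λ*‖ < r, the scaled gradient projection iterate (with bounded scaling eigenvalues in [t, T], 0 < t ≤ T < ∞, and step sizes in [α_min, 1], α_min > 0) has active set exactly A(λ*). In particular, any sequence generated by the gradient projection algorithm converging to λ* satisfies A(λᵏ) = A(λ*) for all sufficiently large k. -/

import Mathlib

open scoped RealInnerProductSpace
open Filter Classical

/-- `IsGPStep g' Λ tmin Tmax αmin lam μ` : `μ` is obtained from `lam` by one scaled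
gradient-projection step on `Λ`, with some step size in `[αmin, 1]` and some symmetric
positive definite scaling matrix whose eigenvalues lie in `[tmin, Tmax]`. -/
def IsGPStep {m : ℕ}
    (g' : EuclideanSpace ℝ (Fin m) → EuclideanSpace ℝ (Fin m))
    (Λ : Set (EuclideanSpace ℝ (Fin m))) (tmin Tmax αmin : ℝ)
    (lam μ : EuclideanSpace ℝ (Fin m)) : Prop :=
  ∃ α : ℝ, αmin ≤ α ∧ α ≤ 1 ∧
    ∃ S : Matrix (Fin m) (Fin m) ℝ, S.PosDef ∧
      (S - tmin • (1 : Matrix (Fin m) (Fin m) ℝ)).PosSemidef ∧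
      (Tmax • (1 : Matrix (Fin m) (Fin m) ℝ) - S).PosSemidef ∧
      μ ∈ Λ ∧
      IsMinOn (fun y => ⟪g' lam, y - lam⟫ +
        (1 / (2 * α)) * ⟪y - lam, Matrix.toEuclideanLin S⁻¹ (y - lam)⟫) Λ μ

/-!
A step `μ` from `λ` satisfies the first-order condition `0 ≤ ⟪w, d⟫` for every tangent direction
`d` of `Λ` at `μ`, with `w = ∇g(λ) + α⁻¹ S⁻¹ (μ - λ)`. Tested against `λ* - μ`, together with
`0 ≤ ⟪∇g(λ*), μ - λ*⟫` from the KKT identity, it gives `‖μ - λ*‖ = O(‖λ - λ*‖)`; hence constraints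
inactive at `λ*` stay inactive at `μ`, and `w → ∇g(λ*)`. Conversely, let `y ∈ Λ` have active set
`B ⊊ A(λ*)`. Strict complementarity gives `⟪∇g(λ*), y - λ*⟫ > 0`, whereas at a step `μ` with active
set `B` both `±(y - λ*)` are tangent, forcing `⟪w, y - λ*⟫ = 0`. So near `λ*` no step has active
set `B`, and there are only finitely many such `B`.
-/
open Topology

section ScaledModel

variable {E : Type*} [NormedAddCommGroup E] [InnerProductSpace ℝ E]

lemma hasFDerivAt_scaledModel {T : E →L[ℝ] E} (hT : (T : E →ₗ[ℝ] E).IsSymmetric)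
    (g x μ : E) (c : ℝ) :
    HasFDerivAt (fun y => ⟪g, y - x⟫ + c * ⟪y - x, T (y - x)⟫)
      (innerSL ℝ (g + (2 * c) • T (μ - x))) μ := by
  have hsub : HasFDerivAt (fun y : E => y - x) (ContinuousLinearMap.id ℝ E) μ :=
    (hasFDerivAt_id μ).sub_const x
  have hlin := ((innerSL ℝ g).hasFDerivAt).comp μ hsub
  have hquad := hsub.inner ℝ (T.hasFDerivAt.comp μ hsub)
  refine (hlin.add (hquad.const_mul c)).congr_fderiv ?_
  ext d
  have hsymm := hT (μ - x) d
  simp only [ContinuousLinearMap.coe_coe] at hsymm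
  simp only [ContinuousLinearMap.comp_id, Function.comp_apply, add_apply,
    coe_innerSL_apply, smul_apply, ContinuousLinearMap.comp_apply,
    ContinuousLinearMap.prod_apply, ContinuousLinearMap.id_apply, fderivInnerCLM_apply, smul_eq_mul,
    inner_add_left, real_inner_smul_left, hsymm, add_right_inj]
  rw [real_inner_comm (T (μ - x)) d, hsymm]
  ring

lemma IsMinOn.inner_scaledModel_nonneg {T : E →L[ℝ] E} (hT : (T : E →ₗ[ℝ] E).IsSymmetric)
    {s : Set E} {g x μ d : E} {α : ℝ}
    (hmin : IsMinOn (fun y => ⟪g, y - x⟫ + (1 / (2 * α)) * ⟪y - x, T (y - x)⟫) s μ)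
    (hd : d ∈ posTangentConeAt s μ) :
    0 ≤ ⟪g + α⁻¹ • T (μ - x), d⟫ := by
  have h := hmin.localize.hasFDerivWithinAt_nonneg
    (hasFDerivAt_scaledModel hT g x μ _).hasFDerivWithinAt hd
  rwa [innerSL_apply_apply, show 2 * (1 / (2 * α)) = α⁻¹ by ring] at h

lemma norm_sub_le_of_inner_scaledModel_nonneg {T : E →ₗ[ℝ] E} {L κ K α : ℝ}
    (hL : 0 ≤ L) (hκ : 0 < κ) (hK : 0 ≤ K) (hα : 0 < α) (hα1 : α ≤ 1)
    (hTle : ∀ v, ‖T v‖ ≤ L * ‖v‖) (hTge : ∀ v, κ * ‖v‖ ^ 2 ≤ ⟪T v, v⟫)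
    {g₀ g₁ x₀ x μ : E} (hg : ‖g₁ - g₀‖ ≤ K * ‖x - x₀‖) (hopt : 0 ≤ ⟪g₀, μ - x₀⟫)
    (hvi : 0 ≤ ⟪g₁ + α⁻¹ • T (μ - x), x₀ - μ⟫) :
    ‖μ - x₀‖ ≤ (K + L) / κ * ‖x - x₀‖ := by
  set u := μ - x₀
  set e := x - x₀
  have hstep : μ - x = u - e := by simp [u, e]
  have hvi' : ⟪T u, u⟫ - ⟪T e, u⟫ ≤ α * (-⟪g₁, u⟫) := by
    rw [hstep, show x₀ - μ = -u by simp [u], map_sub] at hvi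
    simp only [inner_neg_right, inner_add_left, real_inner_smul_left, inner_sub_left] at hvi
    have := mul_le_mul_of_nonneg_left (by linarith : α⁻¹ * (⟪T u, u⟫ - ⟪T e, u⟫) ≤ -⟪g₁, u⟫) hα.le
    rwa [← mul_assoc, mul_inv_cancel₀ hα.ne', one_mul] at this
  have hgrad : -⟪g₁, u⟫ ≤ K * ‖e‖ * ‖u‖ := by
    have h1 : -⟪g₁ - g₀, u⟫ ≤ ‖g₁ - g₀‖ * ‖u‖ :=
      (neg_le_abs _).trans (abs_real_inner_le_norm _ _)
    rw [inner_sub_left] at h1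
    nlinarith [mul_le_mul_of_nonneg_right hg (norm_nonneg u)]
  have hTe : ⟪T e, u⟫ ≤ L * ‖e‖ * ‖u‖ :=
    (real_inner_le_norm _ _).trans (mul_le_mul_of_nonneg_right (hTle e) (norm_nonneg u))
  have hquad : κ * ‖u‖ ^ 2 ≤ (K + L) * ‖e‖ * ‖u‖ := by
    have : 0 ≤ K * ‖e‖ * ‖u‖ := by positivity
    nlinarith [hTge u, mul_le_mul_of_nonneg_right hα1 this, mul_le_mul_of_nonneg_left hgrad hα.le]
  rcases (norm_nonneg u).eq_or_lt with hu | hu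
  · rw [← hu]; positivity
  · rw [div_mul_eq_mul_div, le_div_iff₀ hκ]
    nlinarith

end ScaledModel

namespace Matrix

variable {n : Type*} [Fintype n] [DecidableEq n] {S : Matrix n n ℝ} {t : ℝ}

lemma toEuclideanLin_smul_one (x : EuclideanSpace ℝ n) :
    toEuclideanLin (t • 1 : Matrix n n ℝ) x = t • x := by
  simp

lemma le_inner_toEuclideanLin_self (h : (S - t • 1).PosSemidef) (x : EuclideanSpace ℝ n) :
    t * ‖x‖ ^ 2 ≤ ⟪toEuclideanLin S x, x⟫ := by
  have := (isPositive_toEuclideanLin_iff.mpr h).inner_nonneg_left x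
  rw [map_sub, LinearMap.sub_apply, toEuclideanLin_smul_one, inner_sub_left, real_inner_smul_left,
    real_inner_self_eq_norm_sq] at this
  linarith

lemma inner_toEuclideanLin_self_le (h : (t • 1 - S).PosSemidef) (x : EuclideanSpace ℝ n) :
    ⟪toEuclideanLin S x, x⟫ ≤ t * ‖x‖ ^ 2 := by
  have := (isPositive_toEuclideanLin_iff.mpr h).inner_nonneg_left x
  rw [map_sub, LinearMap.sub_apply, toEuclideanLin_smul_one, inner_sub_left, real_inner_smul_left,
    real_inner_self_eq_norm_sq] at this
  linarith

lemma PosDef.toEuclideanLin_toEuclideanLin_inv (hS : S.PosDef) (x : EuclideanSpace ℝ n) :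
    toEuclideanLin S (toEuclideanLin S⁻¹ x) = x := by
  rw [← LinearMap.comp_apply, ← toLpLin_mul_same,
    mul_nonsing_inv S ((isUnit_iff_isUnit_det S).mp hS.isUnit), toLpLin_one, LinearMap.id_apply]

lemma PosDef.norm_toEuclideanLin_inv_le (hS : S.PosDef) (ht : 0 < t)
    (h : (S - t • 1).PosSemidef) (x : EuclideanSpace ℝ n) :
    ‖toEuclideanLin S⁻¹ x‖ ≤ t⁻¹ * ‖x‖ := by
  set y := toEuclideanLin S⁻¹ x
  have h1 : t * ‖y‖ ^ 2 ≤ ‖x‖ * ‖y‖ := by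
    have := le_inner_toEuclideanLin_self h y
    rw [hS.toEuclideanLin_toEuclideanLin_inv] at this
    exact this.trans (real_inner_le_norm x y)
  rw [inv_mul_eq_div, le_div_iff₀ ht]
  rcases (norm_nonneg y).eq_or_lt with hy | hy
  · rw [← hy, zero_mul]; exact norm_nonneg x
  · nlinarith

lemma PosDef.inv_mul_le_inner_toEuclideanLin_inv (hS : S.PosDef)
    (h : (t • 1 - S).PosSemidef) (x : EuclideanSpace ℝ n) :
    t⁻¹ * ‖x‖ ^ 2 ≤ ⟪toEuclideanLin S⁻¹ x, x⟫ := by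
  set y := toEuclideanLin S⁻¹ x
  have hSy : toEuclideanLin S y = x := hS.toEuclideanLin_toEuclideanLin_inv x
  have hsymm : ⟪toEuclideanLin S x, y⟫ = ⟪x, toEuclideanLin S y⟫ :=
    isSymmetric_toEuclideanLin_iff.mpr hS.isHermitian x y
  have hpos := (isPositive_toEuclideanLin_iff.mpr hS.posSemidef).inner_nonneg_left (y - t⁻¹ • x)
  have hup := inner_toEuclideanLin_self_le h x
  simp only [map_sub, _root_.map_smul, inner_sub_left, inner_sub_right, real_inner_smul_left,
    real_inner_smul_right, hSy, hsymm, real_inner_self_eq_norm_sq] at hpos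
  have hquad : t⁻¹ * (t⁻¹ * ⟪toEuclideanLin S x, x⟫) ≤ t⁻¹ * ‖x‖ ^ 2 :=
    calc t⁻¹ * (t⁻¹ * ⟪toEuclideanLin S x, x⟫) ≤ t⁻¹ * (t⁻¹ * (t * ‖x‖ ^ 2)) := by
          rw [← mul_assoc, ← mul_assoc]; exact mul_le_mul_of_nonneg_left hup (mul_self_nonneg _)
      _ = t⁻¹ * t⁻¹⁻¹ * t⁻¹ * ‖x‖ ^ 2 := by rw [inv_inv]; ring
      _ = t⁻¹ * ‖x‖ ^ 2 := by rw [mul_inv_mul_cancel]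
  rw [real_inner_comm]
  linarith

end Matrix

section GradientProjectionStep

open Matrix

variable {m : ℕ} {g' : EuclideanSpace ℝ (Fin m) → EuclideanSpace ℝ (Fin m)}
  {s : Set (EuclideanSpace ℝ (Fin m))} {tmin Tmax αmin : ℝ} {x x₀ μ : EuclideanSpace ℝ (Fin m)}

lemma IsGPStep.mem (h : IsGPStep g' s tmin Tmax αmin x μ) : μ ∈ s := by
  obtain ⟨-, -, -, -, -, -, -, hμ, -⟩ := h
  exact hμ

lemma IsGPStep.exists_firstOrder (h : IsGPStep g' s tmin Tmax αmin x μ) (ht : 0 < tmin) :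
    ∃ α, αmin ≤ α ∧ α ≤ 1 ∧
      ∃ T : EuclideanSpace ℝ (Fin m) →ₗ[ℝ] EuclideanSpace ℝ (Fin m),
        (∀ v, ‖T v‖ ≤ tmin⁻¹ * ‖v‖) ∧ (∀ v, Tmax⁻¹ * ‖v‖ ^ 2 ≤ ⟪T v, v⟫) ∧
        ∀ d ∈ posTangentConeAt s μ, 0 ≤ ⟪g' x + α⁻¹ • T (μ - x), d⟫ := by
  obtain ⟨α, hαmin, hα1, S, hS, hSt, hST, -, hmin⟩ := h
  refine ⟨α, hαmin, hα1, toEuclideanLin S⁻¹, hS.norm_toEuclideanLin_inv_le ht hSt,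
    hS.inv_mul_le_inner_toEuclideanLin_inv hST, fun d hd => ?_⟩
  exact hmin.inner_scaledModel_nonneg (T := LinearMap.toContinuousLinearMap (toEuclideanLin S⁻¹))
    (isSymmetric_toEuclideanLin_iff.mpr hS.inv.isHermitian) hd

lemma IsGPStep.norm_sub_le_mul {K : NNReal} (hs : Convex ℝ s) (hx₀ : x₀ ∈ s)
    (hopt : ∀ y ∈ s, 0 ≤ ⟪g' x₀, y - x₀⟫) (hlip : LipschitzWith K g')
    (ht : 0 < tmin) (htT : tmin ≤ Tmax) (hαmin : 0 < αmin)
    (h : IsGPStep g' s tmin Tmax αmin x μ) :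
    ‖μ - x₀‖ ≤ (K + tmin⁻¹) * Tmax * ‖x - x₀‖ := by
  obtain ⟨α, hαmin', hα1, T, hTle, hTge, hvi⟩ := h.exists_firstOrder ht
  have hlip' : ‖g' x - g' x₀‖ ≤ K * ‖x - x₀‖ := by
    simpa [dist_eq_norm] using hlip.dist_le_mul x x₀
  have := norm_sub_le_of_inner_scaledModel_nonneg (inv_pos.mpr ht).le
    (inv_pos.mpr (ht.trans_le htT)) K.coe_nonneg (hαmin.trans_le hαmin') hα1 hTle hTge hlip' (hopt μ h.mem)
    (hvi _ (sub_mem_posTangentConeAt_of_segment_subset (hs.segment_subset h.mem hx₀)))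
  rwa [div_inv_eq_mul] at this

lemma IsGPStep.exists_residual {K : NNReal} {C : ℝ} (hlip : LipschitzWith K g')
    (ht : 0 < tmin) (hαmin : 0 < αmin) (h : IsGPStep g' s tmin Tmax αmin x μ)
    (hC : ‖μ - x₀‖ ≤ C * ‖x - x₀‖) :
    ∃ w, (∀ d ∈ posTangentConeAt s μ, 0 ≤ ⟪w, d⟫) ∧
      ‖w - g' x₀‖ ≤ (K + αmin⁻¹ * tmin⁻¹ * (C + 1)) * ‖x - x₀‖ := by
  obtain ⟨α, hαmin', -, T, hTle, -, hvi⟩ := h.exists_firstOrder ht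
  refine ⟨_, hvi, ?_⟩
  have hlip' : ‖g' x - g' x₀‖ ≤ K * ‖x - x₀‖ := by
    simpa [dist_eq_norm] using hlip.dist_le_mul x x₀
  have hstep : ‖μ - x‖ ≤ (C + 1) * ‖x - x₀‖ :=
    calc ‖μ - x‖ = ‖(μ - x₀) - (x - x₀)‖ := by rw [sub_sub_sub_cancel_right]
      _ ≤ ‖μ - x₀‖ + ‖x - x₀‖ := norm_sub_le _ _
      _ ≤ (C + 1) * ‖x - x₀‖ := by linarith
  have hscale : ‖α⁻¹ • T (μ - x)‖ ≤ αmin⁻¹ * tmin⁻¹ * ((C + 1) * ‖x - x₀‖) := by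
    rw [norm_smul, Real.norm_of_nonneg (inv_nonneg.mpr (hαmin.trans_le hαmin').le), mul_assoc]
    gcongr
    exact (hTle _).trans (by gcongr)
  calc ‖g' x + α⁻¹ • T (μ - x) - g' x₀‖ = ‖(g' x - g' x₀) + α⁻¹ • T (μ - x)‖ := by
        rw [add_sub_right_comm]
    _ ≤ ‖g' x - g' x₀‖ + ‖α⁻¹ • T (μ - x)‖ := norm_add_le _ _
    _ ≤ (K + αmin⁻¹ * tmin⁻¹ * (C + 1)) * ‖x - x₀‖ := by linarith

end GradientProjectionStep

section Polyhedron

variable {E : Type*} [NormedAddCommGroup E] [InnerProductSpace ℝ E] {ι : Type*}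
  (a : ι → E) (b : ι → ℝ)

def polyhedron : Set E := {x | ∀ j, ⟪a j, x⟫ ≤ b j}

def activeSet (x : E) : Set ι := {j | ⟪a j, x⟫ = b j}

lemma convex_polyhedron : Convex ℝ (polyhedron a b) := by
  rw [polyhedron, Set.ofPred_forall]
  exact convex_iInter fun j => convex_halfSpace_le (innerₛₗ ℝ (a j)).isLinear (b j)

variable {a b} [Finite ι]

lemma mem_posTangentConeAt_polyhedron {x d : E} (hx : x ∈ polyhedron a b)
    (hd : ∀ j ∈ activeSet a b x, ⟪a j, d⟫ ≤ 0) : d ∈ posTangentConeAt (polyhedron a b) x := by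
  refine mem_posTangentConeAt_of_frequently_mem (Eventually.frequently ?_)
  refine eventually_all.mpr fun j => ?_
  have hline : ∀ t : ℝ, ⟪a j, x + t • d⟫ = ⟪a j, x⟫ + t * ⟪a j, d⟫ := fun t => by
    rw [inner_add_right, real_inner_smul_right]
  by_cases hj : j ∈ activeSet a b x
  · filter_upwards [self_mem_nhdsWithin] with t (ht : 0 < t)
    rw [hline]
    nlinarith [hd j hj, hx j]
  · have hcont : Continuous fun t : ℝ => ⟪a j, x⟫ + t * ⟪a j, d⟫ := by fun_prop
    have hlt : ⟪a j, x⟫ + 0 * ⟪a j, d⟫ < b j := by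
      rw [zero_mul, add_zero]; exact (hx j).lt_of_ne hj
    filter_upwards [nhdsWithin_le_nhds (hcont.continuousAt.eventually_lt continuousAt_const hlt)]
      with t ht
    rw [hline]; exact ht.le

lemma eventually_activeSet_subset (x : E) : ∀ᶠ y in 𝓝 x, activeSet a b y ⊆ activeSet a b x := by
  refine (eventually_all.mpr fun j => ?_).mono fun y hy j => hy j
  change ∀ᶠ y in 𝓝 x, j ∈ activeSet a b y → j ∈ activeSet a b x
  by_cases hj : j ∈ activeSet a b x
  · exact Eventually.of_forall fun _ _ => hj
  · have hcont : Continuous fun y => ⟪a j, y⟫ := by fun_prop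
    exact (hcont.continuousAt.eventually_ne hj).mono fun y hy hy' => absurd hy' hy

end Polyhedron

section KKT

variable {E : Type*} [NormedAddCommGroup E] [InnerProductSpace ℝ E] {ι : Type*}
  {a : ι → E} {b : ι → ℝ} {A : Finset ι} {c : ι → ℝ} {g₀ x₀ : E}

lemma inner_sub_eq_sum_of_kkt (hA : ∀ j ∈ A, ⟪a j, x₀⟫ = b j)
    (hkkt : g₀ = -∑ j ∈ A, c j • a j) (y : E) :
    ⟪g₀, y - x₀⟫ = ∑ j ∈ A, c j * (b j - ⟪a j, y⟫) := by
  rw [hkkt, inner_neg_left, sum_inner, ← Finset.sum_neg_distrib]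
  refine Finset.sum_congr rfl fun j hj => ?_
  rw [real_inner_smul_left, inner_sub_right, hA j hj]
  ring

lemma inner_sub_nonneg_of_kkt (hA : ∀ j ∈ A, ⟪a j, x₀⟫ = b j) (hc : ∀ j ∈ A, 0 ≤ c j)
    (hkkt : g₀ = -∑ j ∈ A, c j • a j) {y : E} (hy : y ∈ polyhedron a b) :
    0 ≤ ⟪g₀, y - x₀⟫ := by
  rw [inner_sub_eq_sum_of_kkt hA hkkt]
  exact Finset.sum_nonneg fun j hj => mul_nonneg (hc j hj) (sub_nonneg.mpr (hy j))

lemma inner_sub_pos_of_kkt (hA : ∀ j, j ∈ A ↔ j ∈ activeSet a b x₀) (hc : ∀ j ∈ A, 0 < c j)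
    (hkkt : g₀ = -∑ j ∈ A, c j • a j) {y : E} (hy : y ∈ polyhedron a b)
    (hyx : ¬ activeSet a b x₀ ⊆ activeSet a b y) :
    0 < ⟪g₀, y - x₀⟫ := by
  obtain ⟨i, hix, hiy⟩ := Set.not_subset.mp hyx
  rw [inner_sub_eq_sum_of_kkt (fun j hj => (hA j).mp hj) hkkt]
  refine Finset.sum_pos' (fun j hj => mul_nonneg (hc j hj).le (sub_nonneg.mpr (hy j)))
    ⟨i, (hA i).mpr hix, mul_pos (hc i ((hA i).mpr hix)) (sub_pos.mpr ((hy i).lt_of_ne hiy))⟩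

end KKT

lemma eventually_forall_of_norm_sub_le {E : Type*} [SeminormedAddCommGroup E]
    {R : E → E → Prop} {x₀ : E} {C : ℝ} (hR : ∀ x y, R x y → ‖y - x₀‖ ≤ C * ‖x - x₀‖)
    {P : E → Prop} (hP : ∀ᶠ y in 𝓝 x₀, P y) : ∀ᶠ x in 𝓝 x₀, ∀ y, R x y → P y := by
  obtain ⟨ε, hε, hball⟩ := Metric.eventually_nhds_iff.mp hP
  have hcont : Continuous fun x => C * ‖x - x₀‖ := by fun_prop
  filter_upwards [hcont.continuousAt.eventually_lt continuousAt_const (by simpa using hε)]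
    with x hx y hxy
  exact hball (by rw [dist_eq_norm]; exact (hR x y hxy).trans_lt hx)

section ActiveSetIdentification

variable {E : Type*} [NormedAddCommGroup E] [InnerProductSpace ℝ E] {ι : Type*} [Finite ι]
  {a : ι → E} {b : ι → ℝ} {R : E → E → Prop} {g₀ x₀ : E} {D : ℝ}

lemma eventually_forall_activeSet_ne
    (hR : ∀ x μ, R x μ → μ ∈ polyhedron a b ∧ ∃ w,
      (∀ d ∈ posTangentConeAt (polyhedron a b) μ, 0 ≤ ⟪w, d⟫) ∧ ‖w - g₀‖ ≤ D * ‖x - x₀‖)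
    {y : E} (hyx : activeSet a b y ⊆ activeSet a b x₀) (hpos : 0 < ⟪g₀, y - x₀⟫) :
    ∀ᶠ x in 𝓝 x₀, ∀ μ, R x μ → activeSet a b μ ≠ activeSet a b y := by
  set d := y - x₀
  have hd : ∀ j ∈ activeSet a b y, ⟪a j, d⟫ = 0 := fun j hj => by
    rw [inner_sub_right, hj, hyx hj, sub_self]
  have hcont : Continuous fun x => D * ‖x - x₀‖ * ‖d‖ := by fun_prop
  filter_upwards [hcont.continuousAt.eventually_lt continuousAt_const (by simpa using hpos)]
    with x hx μ hxμ hact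
  obtain ⟨hμ, w, hw, hwg⟩ := hR x μ hxμ
  have hwd : ⟪w, d⟫ = 0 := by
    have h₁ := hw d (mem_posTangentConeAt_polyhedron hμ fun j hj => (hd j (hact ▸ hj)).le)
    have h₂ := hw (-d) (mem_posTangentConeAt_polyhedron hμ fun j hj => by
      rw [inner_neg_right, hd j (hact ▸ hj), neg_zero])
    rw [inner_neg_right] at h₂
    linarith
  have : ⟪g₀, d⟫ ≤ D * ‖x - x₀‖ * ‖d‖ :=
    calc ⟪g₀, d⟫ = ⟪g₀ - w, d⟫ := by rw [inner_sub_left, hwd, sub_zero]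
      _ ≤ ‖w - g₀‖ * ‖d‖ := by rw [← norm_neg, neg_sub]; exact real_inner_le_norm _ _
      _ ≤ D * ‖x - x₀‖ * ‖d‖ := by gcongr
  exact absurd hx this.not_gt

theorem eventually_activeSet_eq_of_kkt {A : Finset ι} {c : ι → ℝ}
    (hA : ∀ j, j ∈ A ↔ j ∈ activeSet a b x₀) (hc : ∀ j ∈ A, 0 < c j)
    (hkkt : g₀ = -∑ j ∈ A, c j • a j) {C : ℝ}
    (hC : ∀ x μ, R x μ → ‖μ - x₀‖ ≤ C * ‖x - x₀‖)
    (hR : ∀ x μ, R x μ → μ ∈ polyhedron a b ∧ ∃ w,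
      (∀ d ∈ posTangentConeAt (polyhedron a b) μ, 0 ≤ ⟪w, d⟫) ∧ ‖w - g₀‖ ≤ D * ‖x - x₀‖) :
    ∀ᶠ x in 𝓝 x₀, ∀ μ, R x μ → activeSet a b μ = activeSet a b x₀ := by
  have hsub :=
    eventually_forall_of_norm_sub_le hC (eventually_activeSet_subset (a := a) (b := b) x₀)
  have hsup : ∀ B : Set ι, ∀ᶠ x in 𝓝 x₀, ∀ μ, R x μ → activeSet a b μ = B →
      activeSet a b μ ⊆ activeSet a b x₀ → activeSet a b x₀ ⊆ activeSet a b μ := by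
    intro B
    by_cases hB : ∃ y ∈ polyhedron a b, activeSet a b y = B ∧
        activeSet a b y ⊆ activeSet a b x₀ ∧ ¬ activeSet a b x₀ ⊆ activeSet a b y
    · obtain ⟨y, hy, rfl, hyx, hxy⟩ := hB
      have hpos := inner_sub_pos_of_kkt hA hc hkkt hy hxy
      filter_upwards [eventually_forall_activeSet_ne hR hyx hpos] with x hx μ hxμ hμy
      exact absurd hμy (hx μ hxμ)
    · exact Eventually.of_forall fun x μ hxμ hμB hμx => by
        by_contra hxμ'
        exact hB ⟨μ, (hR x μ hxμ).1, hμB, hμx, hxμ'⟩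
  filter_upwards [hsub, eventually_all.mpr hsup] with x hx hx' μ hxμ
  exact (hx μ hxμ).antisymm (hx' _ μ hxμ rfl (hx μ hxμ))

end ActiveSetIdentification

theorem stmt6_general {m p : ℕ}
    (a : Fin p → EuclideanSpace ℝ (Fin m)) (b : Fin p → ℝ)
    (Λ : Set (EuclideanSpace ℝ (Fin m)))
    (hΛ : Λ = {lam | ∀ j, ⟪a j, lam⟫ ≤ b j})
    (g' : EuclideanSpace ℝ (Fin m) → EuclideanSpace ℝ (Fin m))
    (K : NNReal) (hlip : LipschitzWith K g')
    (tmin Tmax αmin : ℝ) (ht : 0 < tmin) (htT : tmin ≤ Tmax)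
    (hαmin : 0 < αmin)
    (lstar : EuclideanSpace ℝ (Fin m)) (hmem : lstar ∈ Λ)
    (A : Finset (Fin p)) (hA : A = Finset.univ.filter fun j => ⟪a j, lstar⟫ = b j)
    -- strict complementarity at `lstar`
    (c : Fin p → ℝ) (hcpos : ∀ j ∈ A, 0 < c j)
    (hkkt : g' lstar = -∑ j ∈ A, c j • a j) :
    (∃ r > (0 : ℝ), ∀ lam ∈ Λ, ‖lam - lstar‖ < r →
        ∀ μ, IsGPStep g' Λ tmin Tmax αmin lam μ →
          {j | ⟪a j, μ⟫ = b j} = {j | ⟪a j, lstar⟫ = b j}) ∧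
      ∀ lamseq : ℕ → EuclideanSpace ℝ (Fin m),
        (∀ k, lamseq k ∈ Λ) →
        (∀ k, IsGPStep g' Λ tmin Tmax αmin (lamseq k) (lamseq (k + 1))) →
        Tendsto lamseq atTop (nhds lstar) →
        ∀ᶠ k in atTop, {j | ⟪a j, lamseq k⟫ = b j} = {j | ⟪a j, lstar⟫ = b j} := by
  change Λ = polyhedron a b at hΛ
  subst hΛ
  have hA' : ∀ j, j ∈ A ↔ j ∈ activeSet a b lstar := by simp [hA, activeSet]
  have hopt : ∀ y ∈ polyhedron a b, 0 ≤ ⟪g' lstar, y - lstar⟫ := fun y hy =>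
    inner_sub_nonneg_of_kkt (fun j hj => (hA' j).mp hj) (fun j hj => (hcpos j hj).le) hkkt hy
  have hC : ∀ x μ, IsGPStep g' (polyhedron a b) tmin Tmax αmin x μ →
      ‖μ - lstar‖ ≤ (K + tmin⁻¹) * Tmax * ‖x - lstar‖ := fun x μ h =>
    h.norm_sub_le_mul (convex_polyhedron a b) hmem hopt hlip ht htT hαmin
  have hident := eventually_activeSet_eq_of_kkt hA' hcpos hkkt hC fun x μ h =>
    ⟨h.mem, h.exists_residual hlip ht hαmin (hC x μ h)⟩
  refine ⟨?_, fun lamseq _ hstep hlim => ?_⟩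
  · obtain ⟨r, hr, hball⟩ := Metric.eventually_nhds_iff.mp hident
    exact ⟨r, hr, fun lam _ hlam => hball (by rwa [dist_eq_norm])⟩
  · rw [← map_add_atTop_eq_nat 1, eventually_map]
    exact (hlim.eventually hident).mono fun k hk => hk _ (hstep k)

theorem stmt6 {m p : ℕ}
    (a : Fin p → EuclideanSpace ℝ (Fin m)) (b : Fin p → ℝ)
    (Λ : Set (EuclideanSpace ℝ (Fin m)))
    (hΛ : Λ = {lam | ∀ j, ⟪a j, lam⟫ ≤ b j}) (hΛne : Λ.Nonempty)
    (g : EuclideanSpace ℝ (Fin m) → ℝ)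
    (g' : EuclideanSpace ℝ (Fin m) → EuclideanSpace ℝ (Fin m))
    (hg : ∀ x, HasGradientAt g (g' x) x)
    (hgcv : StrictConvexOn ℝ Set.univ g)
    (K : NNReal) (hlip : LipschitzWith K g')
    (tmin Tmax αmin : ℝ) (ht : 0 < tmin) (htT : tmin ≤ Tmax)
    (hαmin : 0 < αmin) (hα1 : αmin ≤ 1)
    (lstar : EuclideanSpace ℝ (Fin m)) (hmem : lstar ∈ Λ)
    (hminstar : IsMinOn g Λ lstar)
    (A : Finset (Fin p)) (hA : A = Finset.univ.filter fun j => ⟪a j, lstar⟫ = b j)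
    -- strict complementarity at `lstar`
    (c : Fin p → ℝ) (hcpos : ∀ j ∈ A, 0 < c j)
    (hkkt : g' lstar = -∑ j ∈ A, c j • a j) :
    (∃ r > (0 : ℝ), ∀ lam ∈ Λ, ‖lam - lstar‖ < r →
        ∀ μ, IsGPStep g' Λ tmin Tmax αmin lam μ →
          {j | ⟪a j, μ⟫ = b j} = {j | ⟪a j, lstar⟫ = b j}) ∧
      ∀ lamseq : ℕ → EuclideanSpace ℝ (Fin m),
        (∀ k, lamseq k ∈ Λ) →
        (∀ k, IsGPStep g' Λ tmin Tmax αmin (lamseq k) (lamseq (k + 1))) →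
        Tendsto lamseq atTop (nhds lstar) →
        ∀ᶠ k in atTop, {j | ⟪a j, lamseq k⟫ = b j} = {j | ⟪a j, lstar⟫ = b j} :=
  stmt6_general a b Λ hΛ g' K hlip tmin Tmax αmin ht htT hαmin lstar hmem A hA c hcpos hkkt
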